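/- For every real s and every w > 0, the function λ ↦ (λ²·w)·C(s/(λ·w)) = C⫫(λs | λ²w) is monotone increasing on (0, ∞), where C(s) = 2·s·arsinh(s/2) − 2·√(s² + 4) + 4. -/

import Mathlib

/- The derivative of `λ ↦ λ²w·C(s/(λw))` is `λw·(2C(u) - u·C'(u))` with `u = s/(λw)`, so it suffices
that `u·C'(u) ≤ 2C(u)`. With `C'(u) = 2 arsinh(u/2)` and `u = 2 sinh t` this reads
`2 cosh t ≤ t sinh t + 2`, i.e. `4 sinh(t/2)·((t/2) cosh(t/2) - sinh(t/2)) ≥ 0`, which holds because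
`sinh a ≤ a cosh a` for `a ≥ 0` and the left side is even in `t`. -/

/-- The Legendre conjugate of `C*(ζ) = 4 cosh(ζ/2) - 4`. -/
noncomputable def Cfun (s : ℝ) : ℝ :=
  2 * s * Real.arsinh (s / 2) - 2 * Real.sqrt (s ^ 2 + 4) + 4

open Real Set

namespace Real

theorem sinh_le_mul_cosh {x : ℝ} (hx : 0 ≤ x) : sinh x ≤ x * cosh x := by
  have hderiv (y : ℝ) : HasDerivAt (fun y => y * cosh y - sinh y) (y * sinh y) y := by
    refine ((hasDerivAt_id' y).fun_mul (hasDerivAt_cosh y)).fun_sub (hasDerivAt_sinh y)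
      |>.congr_deriv ?_
    ring
  have hmono : MonotoneOn (fun y => y * cosh y - sinh y) (Ici 0) := by
    refine monotoneOn_of_hasDerivWithinAt_nonneg (convex_Ici 0)
      (fun y _ => (hderiv y).continuousAt.continuousWithinAt)
      (fun y _ => (hderiv y).hasDerivWithinAt) fun y hy => ?_
    rw [interior_Ici, mem_Ioi] at hy
    exact mul_nonneg hy.le (sinh_nonneg_iff.2 hy.le)
  have := hmono self_mem_Ici hx hx
  simp only [zero_mul, sinh_zero, sub_zero] at this
  linarith

theorem sinh_mul_mul_cosh_sub_sinh_nonneg (a : ℝ) : 0 ≤ sinh a * (a * cosh a - sinh a) := by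
  rcases le_total 0 a with ha | ha
  · exact mul_nonneg (sinh_nonneg_iff.2 ha) (sub_nonneg.2 (sinh_le_mul_cosh ha))
  · have hneg := neg_nonneg.2 ha
    have := mul_nonneg (sinh_nonneg_iff.2 hneg) (sub_nonneg.2 (sinh_le_mul_cosh hneg))
    rw [sinh_neg, cosh_neg] at this
    linarith

theorem two_mul_cosh_le (t : ℝ) : 2 * cosh t ≤ t * sinh t + 2 := by
  obtain ⟨a, rfl⟩ : ∃ a, t = 2 * a := ⟨t / 2, by ring⟩
  rw [cosh_two_mul, sinh_two_mul, cosh_sq]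
  nlinarith [sinh_mul_mul_cosh_sub_sinh_nonneg a]

end Real

theorem Cfun_two_mul_sinh (t : ℝ) : Cfun (2 * sinh t) = 4 * (t * sinh t - cosh t + 1) := by
  have hsqrt : √((2 * sinh t) ^ 2 + 4) = 2 * cosh t := by
    rw [show (2 * sinh t) ^ 2 + 4 = (2 * cosh t) ^ 2 by rw [mul_pow, mul_pow, cosh_sq]; ring]
    exact sqrt_sq (by positivity)
  rw [Cfun, hsqrt, mul_div_cancel_left₀ _ two_ne_zero, arsinh_sinh]
  ring

theorem hasDerivAt_Cfun (x : ℝ) : HasDerivAt Cfun (2 * arsinh (x / 2)) x := by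
  have hpos : 0 < x ^ 2 + 4 := by positivity
  have harsinh := ((hasDerivAt_id' x).div_const 2).arsinh
  have hsqrt := ((hasDerivAt_pow 2 x).add_const 4).sqrt hpos.ne'
  have hhalf : √(1 + (x / 2) ^ 2) = √(x ^ 2 + 4) / 2 := by
    rw [show 1 + (x / 2) ^ 2 = (x ^ 2 + 4) / 2 ^ 2 by ring, sqrt_div hpos.le, sqrt_sq two_pos.le]
  refine ((((hasDerivAt_id' x).const_mul 2).fun_mul harsinh).fun_sub
    (hsqrt.const_mul 2)).add_const 4 |>.congr_deriv ?_
  have hsqrt_pos := sqrt_pos.2 hpos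
  simp only [hhalf, smul_eq_mul]
  field_simp
  ring

theorem mul_two_arsinh_le_two_mul_Cfun (u : ℝ) : u * (2 * arsinh (u / 2)) ≤ 2 * Cfun u := by
  obtain ⟨t, rfl⟩ : ∃ t, u = 2 * sinh t := ⟨arsinh (u / 2), by rw [sinh_arsinh]; ring⟩
  rw [Cfun_two_mul_sinh, mul_div_cancel_left₀ _ two_ne_zero, arsinh_sinh]
  linarith [two_mul_cosh_le t]

section PerspectiveScaling

variable {F F' : ℝ → ℝ} {s w lam : ℝ}

theorem hasDerivAt_perspective_scaling {f' : ℝ} (hF : HasDerivAt F f' (s / (lam * w)))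
    (hlam : lam ≠ 0) (hw : w ≠ 0) :
    HasDerivAt (fun l => (l ^ 2 * w) * F (s / (l * w)))
      (lam * w * (2 * F (s / (lam * w)) - s / (lam * w) * f')) lam := by
  have hlw : lam * w ≠ 0 := mul_ne_zero hlam hw
  have hinner : HasDerivAt (fun l => s / (l * w)) (-(s * w) / (lam * w) ^ 2) lam := by
    refine (hasDerivAt_const lam s).fun_div ((hasDerivAt_id' lam).mul_const w) hlw
      |>.congr_deriv ?_
    ring
  refine ((hasDerivAt_pow 2 lam).mul_const w).fun_mul (hF.comp lam hinner) |>.congr_deriv ?_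
  rw [Function.comp_apply]
  field_simp
  ring

theorem monotoneOn_perspective_scaling (hF : ∀ u, HasDerivAt F (F' u) u)
    (hFF' : ∀ u, u * F' u ≤ 2 * F u) (s : ℝ) (hw : 0 < w) :
    MonotoneOn (fun lam => (lam ^ 2 * w) * F (s / (lam * w))) (Ioi 0) := by
  have hderiv (lam : ℝ) (hlam : lam ∈ Ioi 0) := hasDerivAt_perspective_scaling (s := s)
    (hF (s / (lam * w))) hlam.ne' hw.ne'
  refine monotoneOn_of_hasDerivWithinAt_nonneg (convex_Ioi 0)
    (fun lam hlam => (hderiv lam hlam).continuousAt.continuousWithinAt)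
    (fun lam hlam => (hderiv lam (interior_subset hlam)).hasDerivWithinAt) fun lam hlam => ?_
  rw [interior_Ioi] at hlam
  exact mul_nonneg (mul_pos hlam hw).le (sub_nonneg.2 (hFF' _))

end PerspectiveScaling

theorem perspective_scaling_monotone (s w : ℝ) (hw : 0 < w) :
    MonotoneOn (fun lam : ℝ => (lam ^ 2 * w) * Cfun (s / (lam * w))) (Set.Ioi 0) :=
  monotoneOn_perspective_scaling hasDerivAt_Cfun mul_two_arsinh_le_two_mul_Cfun s hw
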